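/- arXiv:2408.09120 — 2 statements merged into one kernel-verified Lean document; each statement's English description precedes it below -/
import Mathlib

section
/- For every t ≥ s+1, y_t = μ_1 + Σ_{τ=2}^{t} ξ_τ + (t−1)·ν_1 + Σ_{τ=2}^{t−1} (t−τ)·ζ_τ + γ_{m_t} + Σ_{j=0}^{⌊(t−1)/s⌋−1} (ω_{t−js} − ω_{t−1−js}) + ε_t, where m_t = t − s·⌊(t−1)/s⌋. -/
/-!
Trend and slope are found by summing their recursions; summing the slope once more turns the
double sum of the `ζ τ` into the weighted sum `∑ (t - τ) ζ τ`. For the seasonal part, the window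
sums `ω u` and `ω (u - 1)` share all but their end points, so `ω u - ω (u - 1) = γ u - γ (u - s)`,
and `γ t` telescopes down in steps of `s` to `γ (m t)`, with `1 ≤ m t ≤ s`.
-/

open Finset

theorem eq_add_sum_Icc_of_succ {M : Type*} [AddCommMonoid M] {f g : ℕ → M}
    (h : ∀ t, 1 ≤ t → f (t + 1) = f t + g (t + 1)) (t : ℕ) (ht : 1 ≤ t) :
    f t = f 1 + ∑ τ ∈ Icc 2 t, g τ := by
  induction t, ht using Nat.le_induction with
  | base => simp
  | succ n hn ih => rw [h n hn, ih, sum_Icc_succ_top (by omega), add_assoc]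

theorem sum_range_apply_sub_add {M : Type*} [AddCommMonoid M] (f : ℕ → M) (s t : ℕ) :
    ∑ j ∈ range s, f (t - j) + f (t - s) = f t + ∑ j ∈ range s, f (t - 1 - j) := by
  rw [← sum_range_succ (fun j ↦ f (t - j)), sum_range_succ']
  simp only [Nat.sub_zero, Nat.sub_sub, add_comm 1, add_comm (f t)]

theorem sum_Icc_sub_mul_succ (ζ : ℕ → ℝ) (n : ℕ) :
    ∑ τ ∈ Icc 2 n, ((n + 1 : ℕ) - (τ : ℝ)) * ζ τ
      = ∑ τ ∈ Icc 2 (n - 1), ((n : ℝ) - τ) * ζ τ + ∑ τ ∈ Icc 2 n, ζ τ := by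
  have htop : ∑ τ ∈ Icc 2 (n - 1), ((n : ℝ) - τ) * ζ τ = ∑ τ ∈ Icc 2 n, ((n : ℝ) - τ) * ζ τ := by
    rcases Nat.lt_or_ge n 2 with hn | hn
    · rw [Icc_eq_empty (by omega), Icc_eq_empty (by omega)]
    · obtain ⟨m, rfl⟩ : ∃ m, n = m + 1 := ⟨n - 1, by omega⟩
      rw [sum_Icc_succ_top (by omega), Nat.add_sub_cancel]
      simp
  rw [htop, ← sum_add_distrib]
  refine sum_congr rfl fun τ _ ↦ ?_
  push_cast
  ring

section StructuralModel

variable {s : ℕ} {μ ν γ ξ ζ ω : ℕ → ℝ}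

theorem slope_eq (hν : ∀ t, 1 ≤ t → ν (t + 1) = ν t + ζ (t + 1)) (t : ℕ) (ht : 1 ≤ t) :
    ν t = ν 1 + ∑ τ ∈ Icc 2 t, ζ τ :=
  eq_add_sum_Icc_of_succ hν t ht

theorem trend_eq (hμ : ∀ t, 1 ≤ t → μ (t + 1) = μ t + ν t + ξ (t + 1))
    (hν : ∀ t, 1 ≤ t → ν (t + 1) = ν t + ζ (t + 1)) (t : ℕ) (ht : 1 ≤ t) :
    μ t = μ 1 + (∑ τ ∈ Icc 2 t, ξ τ) + ((t : ℝ) - 1) * ν 1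
        + ∑ τ ∈ Icc 2 (t - 1), ((t : ℝ) - τ) * ζ τ := by
  induction t, ht using Nat.le_induction with
  | base => simp
  | succ n hn ih =>
    rw [hμ n hn, ih, slope_eq hν n hn, sum_Icc_succ_top (by omega), Nat.add_sub_cancel,
      sum_Icc_sub_mul_succ]
    push_cast
    ring

theorem seasonal_eq (hω : ∀ t, s ≤ t → ω t = ∑ j ∈ range s, γ (t - j)) (k t : ℕ)
    (hk : k * s < t) :
    γ t = γ (t - k * s) + ∑ j ∈ range k, (ω (t - j * s) - ω (t - 1 - j * s)) := by
  induction k with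
  | zero => simp
  | succ k ih =>
    rw [add_one_mul] at hk
    have hwindow := sum_range_apply_sub_add γ s (t - k * s)
    rw [← hω _ (by omega), show t - k * s - 1 = t - 1 - k * s by omega, ← hω _ (by omega),
      show t - k * s - s = t - (k + 1) * s by rw [add_one_mul]; omega] at hwindow
    rw [ih (by omega), sum_range_succ]
    linarith

end StructuralModel

theorem bsm_regression_late_general
    (s : ℕ)
    (y μ ν γ ε ξ ζ ω : ℕ → ℝ)
    (hy : ∀ t, 1 ≤ t → y t = μ t + γ t + ε t)
    (hμ : ∀ t, 1 ≤ t → μ (t + 1) = μ t + ν t + ξ (t + 1))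
    (hν : ∀ t, 1 ≤ t → ν (t + 1) = ν t + ζ (t + 1))
    (hω : ∀ t, s ≤ t → ω t = ∑ j ∈ Finset.range s, γ (t - j)) :
    ∀ t, s + 1 ≤ t →
      y t = μ 1 + (∑ τ ∈ Finset.Icc 2 t, ξ τ) + ((t : ℝ) - 1) * ν 1
        + (∑ τ ∈ Finset.Icc 2 (t - 1), ((t : ℝ) - (τ : ℝ)) * ζ τ)
        + γ (t - s * ((t - 1) / s))
        + (∑ j ∈ Finset.range ((t - 1) / s), (ω (t - j * s) - ω (t - 1 - j * s)))
        + ε t := by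
  intro t ht
  have hcycles : (t - 1) / s * s < t := by
    have := Nat.div_mul_le_self (t - 1) s
    omega
  rw [hy t (by omega), trend_eq hμ hν t (by omega), seasonal_eq hω _ t hcycles, mul_comm s]
  ring

/-- Basic structural model, regression form for `t ≥ s+1`:
`y t = μ 1 + ∑_{τ=2}^{t} ξ τ + (t−1)·ν 1 + ∑_{τ=2}^{t−1} (t−τ)·ζ τ + γ (m t)
      + ∑_{j=0}^{⌊(t−1)/s⌋−1} (ω (t−js) − ω (t−1−js)) + ε t`,
where `m t = t − s·⌊(t−1)/s⌋`. -/
theorem bsm_regression_late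
    (s : ℕ) (hs : 2 ≤ s)
    (y μ ν γ ε ξ ζ ω : ℕ → ℝ)
    (hy : ∀ t, 1 ≤ t → y t = μ t + γ t + ε t)
    (hμ : ∀ t, 1 ≤ t → μ (t + 1) = μ t + ν t + ξ (t + 1))
    (hν : ∀ t, 1 ≤ t → ν (t + 1) = ν t + ζ (t + 1))
    (hω : ∀ t, s ≤ t → ω t = ∑ j ∈ Finset.range s, γ (t - j)) :
    ∀ t, s + 1 ≤ t →
      y t = μ 1 + (∑ τ ∈ Finset.Icc 2 t, ξ τ) + ((t : ℝ) - 1) * ν 1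
        + (∑ τ ∈ Finset.Icc 2 (t - 1), ((t : ℝ) - (τ : ℝ)) * ζ τ)
        + γ (t - s * ((t - 1) / s))
        + (∑ j ∈ Finset.range ((t - 1) / s), (ω (t - j * s) - ω (t - 1 - j * s)))
        + ε t :=
  bsm_regression_late_general s y μ ν γ ε ξ ζ ω hy hμ hν hω
end

section
/- Let T ≥ s+1 and suppose ε_t = 0, ξ_t = 0, ζ_t = 0 and ω_t = 0 for all t > T. Then for every t > T, y_t = μ_1 + Σ_{τ=2}^{T} ξ_τ + (t−1)·ν_1 + Σ_{τ=2}^{T} (t−τ)·ζ_τ + γ_{m_t} + Σ_{j=0}^{⌊(t−1)/s⌋−1} (ω_{t−js} − ω_{t−1−js}), where m_t = t − s·⌊(t−1)/s⌋ (and the last sum only has nonzero terms with index at most T). -/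
/-!
The level and slope recursions are first-order and integrate to explicit sums of the
disturbances; once `ξ` and `ζ` vanish after `T`, those sums stop at `T`. For the seasonal
component, subtracting the defining sums of `ω t` and `ω (t - 1)` gives
`γ t = γ (t - s) + (ω t - ω (t - 1))`, and iterating this `⌊(t - 1) / s⌋` times lands on one
of the initial states `γ 1, …, γ s`.
-/

open Finset

section Trend

variable {R : Type*} [CommRing R] {μ ν ξ ζ : ℕ → R}

theorem slope_eq_add_sum (hν : ∀ t, 1 ≤ t → ν (t + 1) = ν t + ζ (t + 1)) {t : ℕ} (ht : 1 ≤ t) :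
    ν t = ν 1 + ∑ τ ∈ Icc 2 t, ζ τ := by
  induction t, ht using Nat.le_induction with
  | base => simp
  | succ n hn ih =>
    rw [hν n hn, ih, sum_Icc_succ_top (by omega : 2 ≤ n + 1), add_assoc]

theorem level_eq_add_sum (hμ : ∀ t, 1 ≤ t → μ (t + 1) = μ t + ν t + ξ (t + 1))
    (hν : ∀ t, 1 ≤ t → ν (t + 1) = ν t + ζ (t + 1)) {t : ℕ} (ht : 1 ≤ t) :
    μ t = μ 1 + ∑ τ ∈ Icc 2 t, ξ τ + ((t : R) - 1) * ν 1
      + ∑ τ ∈ Icc 2 t, ((t : R) - τ) * ζ τ := by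
  induction t, ht using Nat.le_induction with
  | base => simp
  | succ n hn ih =>
    have hζ : ∑ τ ∈ Icc 2 n, ((n : R) + 1 - τ) * ζ τ
        = ∑ τ ∈ Icc 2 n, ((n : R) - τ) * ζ τ + ∑ τ ∈ Icc 2 n, ζ τ := by
      rw [← sum_add_distrib]
      exact sum_congr rfl fun τ _ => by ring
    rw [hμ n hn, ih, slope_eq_add_sum hν hn, sum_Icc_succ_top (by omega : 2 ≤ n + 1),
      sum_Icc_succ_top (by omega : 2 ≤ n + 1)]
    push_cast
    rw [hζ]
    ring

end Trend

theorem sum_Icc_eq_sum_Icc_of_eq_zero {M : Type*} [AddCommMonoid M] {f : ℕ → M} {a T t : ℕ}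
    (hTt : T ≤ t) (hf : ∀ τ, T < τ → f τ = 0) :
    ∑ τ ∈ Icc a t, f τ = ∑ τ ∈ Icc a T, f τ :=
  (sum_subset (Icc_subset_Icc le_rfl hTt) fun τ _ hτ => hf τ (by simp_all)).symm

section Seasonal

variable {M : Type*} [AddCommGroup M] {s : ℕ} {γ ω : ℕ → M}

theorem seasonal_eq_add_sub (hω : ∀ t, s ≤ t → ω t = ∑ j ∈ range s, γ (t - j)) {t : ℕ}
    (ht : s < t) : γ t = γ (t - s) + (ω t - ω (t - 1)) := by
  cases s with
  | zero => simp [hω t (Nat.zero_le _), hω (t - 1) (Nat.zero_le _)]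
  | succ n =>
    have hcur : ω t = γ t + ∑ j ∈ range n, γ (t - 1 - j) := by
      rw [hω t ht.le, sum_range_succ', add_comm]
      exact congrArg₂ _ rfl (sum_congr rfl fun j _ => by rw [Nat.sub_sub, add_comm 1])
    have hprev : ω (t - 1) = ∑ j ∈ range n, γ (t - 1 - j) + γ (t - (n + 1)) := by
      rw [hω (t - 1) (by omega), sum_range_succ, Nat.sub_sub, add_comm 1]
    rw [hcur, hprev]
    abel

theorem seasonal_eq_add_sum (hω : ∀ t, s ≤ t → ω t = ∑ j ∈ range s, γ (t - j)) {t : ℕ} :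
    ∀ k, k * s < t →
      γ t = γ (t - k * s) + ∑ j ∈ range k, (ω (t - j * s) - ω (t - 1 - j * s))
  | 0, _ => by simp
  | k + 1, hk => by
    rw [add_one_mul] at hk ⊢
    rw [seasonal_eq_add_sum hω k (by omega), sum_range_succ,
      seasonal_eq_add_sub hω (by omega : s < t - k * s), Nat.sub_sub, Nat.sub_right_comm t]
    abel

theorem seasonal_eq_initial_add_sum (hω : ∀ t, s ≤ t → ω t = ∑ j ∈ range s, γ (t - j))
    {t : ℕ} (ht : 1 ≤ t) :
    γ t = γ (t - s * ((t - 1) / s))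
      + ∑ j ∈ range ((t - 1) / s), (ω (t - j * s) - ω (t - 1 - j * s)) := by
  have hk : (t - 1) / s * s < t := by
    have := Nat.div_mul_le_self (t - 1) s
    omega
  rw [mul_comm s]
  exact seasonal_eq_add_sum hω _ hk

end Seasonal

theorem ssl_extrapolation_general
    (s : ℕ)
    (y μ ν γ ε ξ ζ ω : ℕ → ℝ)
    (hy : ∀ t, 1 ≤ t → y t = μ t + γ t + ε t)
    (hμ : ∀ t, 1 ≤ t → μ (t + 1) = μ t + ν t + ξ (t + 1))
    (hν : ∀ t, 1 ≤ t → ν (t + 1) = ν t + ζ (t + 1))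
    (hω : ∀ t, s ≤ t → ω t = ∑ j ∈ Finset.range s, γ (t - j))
    (T : ℕ)
    (hε0 : ∀ t, T < t → ε t = 0)
    (hξ0 : ∀ t, T < t → ξ t = 0)
    (hζ0 : ∀ t, T < t → ζ t = 0) :
    ∀ t, T < t →
      y t = μ 1 + (∑ τ ∈ Finset.Icc 2 T, ξ τ) + ((t : ℝ) - 1) * ν 1
        + (∑ τ ∈ Finset.Icc 2 T, ((t : ℝ) - (τ : ℝ)) * ζ τ)
        + γ (t - s * ((t - 1) / s))
        + (∑ j ∈ Finset.range ((t - 1) / s), (ω (t - j * s) - ω (t - 1 - j * s))) := by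
  intro t ht
  have ht1 : 1 ≤ t := by omega
  rw [hy t ht1, hε0 t ht, level_eq_add_sum hμ hν ht1, seasonal_eq_initial_add_sum hω ht1,
    sum_Icc_eq_sum_Icc_of_eq_zero ht.le hξ0,
    sum_Icc_eq_sum_Icc_of_eq_zero ht.le fun τ hτ => by rw [hζ0 τ hτ, mul_zero]]
  ring

/-- State Space Learning extrapolation formula: in the basic structural model, if all
disturbances vanish after time `T ≥ s+1`, then for `t > T`,
`y t = μ 1 + ∑_{τ=2}^{T} ξ τ + (t−1)·ν 1 + ∑_{τ=2}^{T} (t−τ)·ζ τ + γ (m t)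
      + ∑_{j=0}^{⌊(t−1)/s⌋−1} (ω (t−js) − ω (t−1−js))`,
where `m t = t − s·⌊(t−1)/s⌋`. -/
theorem ssl_extrapolation
    (s : ℕ) (hs : 2 ≤ s)
    (y μ ν γ ε ξ ζ ω : ℕ → ℝ)
    (hy : ∀ t, 1 ≤ t → y t = μ t + γ t + ε t)
    (hμ : ∀ t, 1 ≤ t → μ (t + 1) = μ t + ν t + ξ (t + 1))
    (hν : ∀ t, 1 ≤ t → ν (t + 1) = ν t + ζ (t + 1))
    (hω : ∀ t, s ≤ t → ω t = ∑ j ∈ Finset.range s, γ (t - j))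
    (T : ℕ) (hT : s + 1 ≤ T)
    (hε0 : ∀ t, T < t → ε t = 0)
    (hξ0 : ∀ t, T < t → ξ t = 0)
    (hζ0 : ∀ t, T < t → ζ t = 0)
    (hω0 : ∀ t, T < t → ω t = 0) :
    ∀ t, T < t →
      y t = μ 1 + (∑ τ ∈ Finset.Icc 2 T, ξ τ) + ((t : ℝ) - 1) * ν 1
        + (∑ τ ∈ Finset.Icc 2 T, ((t : ℝ) - (τ : ℝ)) * ζ τ)
        + γ (t - s * ((t - 1) / s))
        + (∑ j ∈ Finset.range ((t - 1) / s), (ω (t - j * s) - ω (t - 1 - j * s))) :=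
  ssl_extrapolation_general s y μ ν γ ε ξ ζ ω hy hμ hν hω T hε0 hξ0 hζ0
end
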